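/- arXiv:1910.01291 — 2 statements merged into one kernel-verified Lean document; each statement's English description precedes it below -/
import Mathlib

section
/- Let M be a loopless matroid with ground set E and lattice of flats L, and let L̂ be the set of flats other than ∅ and E. Then the reduced characteristic polynomial satisfies χ̄_M(q) = [rk M]_q − ∑_{F ∈ L̂} χ̄_{M/F}(q). -/
open Polynomial

namespace MatroidZeta

open scoped Classical

variable {α : Type*}

/-- The `q`-analogue `[n]_q = 1 + q + ⋯ + q^(n-1)` of a natural number `n`, in `ℤ[q]`. -/
noncomputable def qAnalogue (n : ℕ) : Polynomial ℤ := ∑ i ∈ Finset.range n, X ^ i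

/-- The rank of a set `X` in a matroid `M`: the largest size of an independent subset of `X`. -/
noncomputable def rk (M : Matroid α) (X : Set α) : ℕ :=
  sSup {n | ∃ I, M.Indep I ∧ I ⊆ X ∧ I.ncard = n}

/-- Contraction `M / C` of a matroid, defined as the dual of the deletion of `C`
from the dual matroid. -/
noncomputable def contract (M : Matroid α) (C : Set α) : Matroid α :=
  ((M✶.restrict (M✶.E \ C))✶)

/-- A matroid is loopless if no element of the ground set lies in the closure of `∅`. -/
def Loopless (M : Matroid α) : Prop := M.closure ∅ = ∅

/-- The characteristic polynomial `χ_M(q) = ∑_{S ⊆ E} (-1)^{#S} q^(rk M - rk S)`. -/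
noncomputable def charPoly (M : Matroid α) : Polynomial ℤ :=
  ∑ᶠ S ∈ {S : Set α | S ⊆ M.E}, (-1 : ℤ) ^ S.ncard • (X : Polynomial ℤ) ^ (rk M M.E - rk M S)

/-- The reduced characteristic polynomial
`χ̄_M(q) = χ_M(q)/(q-1) = ∑_{S ⊆ E} (-1)^{#S} [rk M - rk S]_q`. -/
noncomputable def redCharPoly (M : Matroid α) : Polynomial ℤ :=
  ∑ᶠ S ∈ {S : Set α | S ⊆ M.E}, (-1 : ℤ) ^ S.ncard • qAnalogue (rk M M.E - rk M S)

/-- `wt_M(w) = max_{B basis of M} ∑_{e ∈ B} w e`. -/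
noncomputable def wt (M : Matroid α) (w : α → ℝ) : ℝ :=
  sSup {x | ∃ B, M.IsBase B ∧ x = ∑ᶠ e ∈ B, w e}

/-- The initial matroid `M_w`: the matroid on the ground set of `M` whose bases are the
bases of `M` of maximal `w`-weight.  (Such a matroid exists and is unique.) -/
noncomputable def initialMatroid (M : Matroid α) (w : α → ℝ) : Matroid α :=
  if h : ∃ N : Matroid α, N.E = M.E ∧
      ∀ B, N.IsBase B ↔ M.IsBase B ∧ ∑ᶠ e ∈ B, w e = wt M w
  then h.choose else M

/-- A flag of non-minimal flats of `M`: a chain of flats strictly above `cl(∅)`. -/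
def IsFlag (M : Matroid α) (C : Finset (Set α)) : Prop :=
  (∀ F ∈ C, M.IsFlat F ∧ M.closure ∅ ⊂ F) ∧ IsChain (· ⊆ ·) (C : Set (Set α))

/-- `N(M)`: the set of flags of non-minimal flats of `M`. -/
def flags (M : Matroid α) : Set (Finset (Set α)) := {C | IsFlag M C}

/-- `N°(M)`: flags not containing the ground set. -/
def flagsCirc (M : Matroid α) : Set (Finset (Set α)) := {C | IsFlag M C ∧ M.E ∉ C}

/-- `N*(M)`: flags containing the ground set. -/
def flagsStar (M : Matroid α) : Set (Finset (Set α)) := {C | IsFlag M C ∧ M.E ∈ C}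

/-- `z_C(F)`: the largest member of the chain `C` strictly below `F` (or `∅` if none). -/
def zmin (C : Finset (Set α)) (F : Set α) : Set α := ⋃₀ {G | G ∈ C ∧ G ⊂ F}

/-- The weight vector `∑_{F ∈ C} v_F`, a point in the relative interior of the cone `σ_C`. -/
noncomputable def flagWeight (C : Finset (Set α)) : α → ℝ :=
  fun e => ∑ F ∈ C, if e ∈ F then (1 : ℝ) else 0

/-- The initial matroid `M_C` of a flag `C`. -/
noncomputable def flagMatroid (M : Matroid α) (C : Finset (Set α)) : Matroid α :=
  initialMatroid M (flagWeight C)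

/-!
Expanding χ̄_{M/F} = ∑_{T ⊆ E \ F} (-1)^{|T|} [r - rk(F ∪ T)]_q and grouping the terms
of ∑_{F ∈ L} χ̄_{M/F} by the flat G = cl(F ∪ T), the coefficient d(G) of [r - rk G]_q
satisfies ∑_{G ⊆ H} d(G) = ∑_{F ⊆ H} ∑_{T ⊆ H \ F} (-1)^{|T|} = 1 for every flat H.
Induction over L then forces d to be the indicator of the least flat, which is ∅ because
M is loopless. Hence ∑_{F ∈ L} χ̄_{M/F} = [r]_q; the terms F = ∅ and F = E are χ̄_M and 0.
-/

open Set Matroid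

noncomputable def powersetFinset (X : Set α) : Finset (Set α) :=
  if hX : X.Finite then hX.toFinset.powerset.image (↑) else ∅

lemma mem_powersetFinset {X T : Set α} (hX : X.Finite) : T ∈ powersetFinset X ↔ T ⊆ X := by
  rw [powersetFinset, dif_pos hX, Finset.mem_image]
  constructor
  · rintro ⟨t, ht, rfl⟩
    simpa using Finset.coe_subset.2 (Finset.mem_powerset.1 ht)
  · intro hT
    exact ⟨(hX.subset hT).toFinset, by simpa using hT, by simp⟩

lemma coe_powersetFinset {X : Set α} (hX : X.Finite) :
    (powersetFinset X : Set (Set α)) = {T | T ⊆ X} := by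
  ext T
  exact mem_powersetFinset hX

lemma sum_powersetFinset_neg_one_pow_ncard {X : Set α} (hX : X.Finite) :
    ∑ T ∈ powersetFinset X, (-1 : ℤ) ^ T.ncard = if X = ∅ then 1 else 0 := by
  rw [powersetFinset, dif_pos hX, Finset.sum_image fun _ _ _ _ h => Finset.coe_injective h]
  simp only [ncard_coe_finset, Finset.sum_powerset_neg_one_pow_card, Finite.toFinset_eq_empty]

lemma eq_ite_of_forall_sum_filter_le_eq {β R : Type*} [PartialOrder β] [AddCommGroup R]
    {s : Finset β} {b : β} (hb : b ∈ s) (hbot : ∀ x ∈ s, b ≤ x) {d : β → R} {c : R}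
    (h : ∀ x ∈ s, ∑ y ∈ s with y ≤ x, d y = c) {x : β} (hx : x ∈ s) :
    d x = if x = b then c else 0 := by
  refine (s.finite_toSet.wellFoundedOn (r := (· < ·))).induction hx
    (P := fun x => d x = if x = b then c else 0) fun x hx ih => ?_
  have hsplit : ∑ y ∈ s with y ≤ x, d y = d x + ∑ y ∈ s with y < x, d y := by
    have hfilter : s.filter (· ≤ x) = insert x (s.filter (· < x)) := by
      ext y
      simp only [Finset.mem_filter, Finset.mem_insert, le_iff_lt_or_eq]
      grind
    rw [hfilter, Finset.sum_insert (by simp)]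
  have hbelow : ∑ y ∈ s with y < x, d y = if b < x then c else 0 := by
    rw [Finset.sum_congr rfl fun y hy =>
      ih y (Finset.mem_filter.1 hy).1 (Finset.mem_filter.1 hy).2, Finset.sum_ite_eq']
    simp [hb]
  have hbx : b < x ↔ x ≠ b := (hbot x hx).lt_iff_ne.trans ne_comm
  rw [← h x hx, hsplit, hbelow, hbx]
  split_ifs <;> simp_all

section Rank

variable {M : Matroid α} {I C T X : Set α}

lemma rk_eq_ncard (hX : X.Finite) (hI : M.IsBasis I X) : rk M X = I.ncard := by
  refine IsGreatest.csSup_eq ⟨⟨I, hI.indep, hI.subset, rfl⟩, ?_⟩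
  rintro _ ⟨J, hJ, hJX, rfl⟩
  exact ENat.toNat_le_toNat (hI.encard_eq_eRk ▸ hJ.encard_le_eRk_of_subset hJX)
    (encard_ne_top_iff.2 (hX.subset hI.subset))

lemma rk_empty (M : Matroid α) : rk M ∅ = 0 := by
  rw [rk_eq_ncard finite_empty M.empty_indep.isBasis_self, ncard_empty]

lemma rk_closure (hE : M.E.Finite) (hX : X ⊆ M.E) : rk M (M.closure X) = rk M X := by
  obtain ⟨I, hI⟩ := M.exists_isBasis X hX
  rw [rk_eq_ncard (hE.subset hX) hI,
    rk_eq_ncard (hE.subset (M.closure_subset_ground X)) hI.isBasis_closure_right]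

lemma rk_contract_add_rk (hE : M.E.Finite) (hC : C ⊆ M.E) (hT : T ⊆ M.E \ C) :
    rk (M ／ C) T + rk M C = rk M (C ∪ T) := by
  have hCT : C ∪ T ⊆ M.E := union_subset hC (hT.trans sdiff_subset)
  obtain ⟨J, hJ⟩ := M.exists_isBasis C hC
  obtain ⟨K, hK, hJK⟩ :=
    hJ.indep.subset_isBasis_of_subset (hJ.subset.trans subset_union_left) hCT
  have hKC : K ∩ C = J := (hJ.eq_of_subset_indep (hK.indep.inter_right C)
    (subset_inter hJK hJ.subset) inter_subset_right).symm
  have hKT : (M ／ C).IsBasis (K \ C) T := by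
    have h := hK.contract_isBasis hJ (hK.indep.subset (union_subset sdiff_subset hJK))
    rwa [union_sdiff_left, (subset_sdiff.1 hT).2.sdiff_eq_left] at h
  rw [rk_eq_ncard (hE.subset (hT.trans sdiff_subset)) hKT, rk_eq_ncard (hE.subset hC) hJ,
    rk_eq_ncard (hE.subset hCT) hK, ← hKC, add_comm,
    ncard_inter_add_ncard_sdiff_eq_ncard K C (hE.subset hK.indep.subset_ground)]

end Rank

section Flats

variable {M : Matroid α} {F H : Set α}

noncomputable def flatsFinset (M : Matroid α) : Finset (Set α) :=
  (powersetFinset M.E).filter M.IsFlat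

lemma mem_flatsFinset (hE : M.E.Finite) : F ∈ flatsFinset M ↔ M.IsFlat F := by
  rw [flatsFinset, Finset.mem_filter, mem_powersetFinset hE]
  exact ⟨fun h => h.2, fun h => ⟨h.subset_ground, h⟩⟩

lemma isFlat_empty_of_loopless (hM : Loopless M) : M.IsFlat ∅ :=
  hM ▸ M.isFlat_closure ∅

lemma _root_.Matroid.IsFlat.closure_subset_iff_subset {X : Set α} (hH : M.IsFlat H)
    (hX : X ⊆ M.E) : M.closure X ⊆ H ↔ X ⊆ H :=
  ⟨(M.subset_closure X hX).trans, fun h => hH.closure ▸ M.closure_subset_closure h⟩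

noncomputable def signedClosureCount (M : Matroid α) (G : Set α) : ℤ :=
  ∑ F ∈ flatsFinset M, ∑ T ∈ powersetFinset (M.E \ F) with M.closure (F ∪ T) = G,
    (-1 : ℤ) ^ T.ncard

lemma sum_flatsFinset_sum_powersetFinset_closure {β : Type*} [AddCommGroup β]
    (hE : M.E.Finite) (φ : Set α → β) :
    ∑ F ∈ flatsFinset M, ∑ T ∈ powersetFinset (M.E \ F),
        (-1 : ℤ) ^ T.ncard • φ (M.closure (F ∪ T))
      = ∑ G ∈ flatsFinset M, signedClosureCount M G • φ G := by
  simp_rw [signedClosureCount, Finset.sum_smul]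
  rw [Finset.sum_comm]
  refine Finset.sum_congr rfl fun F _ => ?_
  rw [← Finset.sum_fiberwise_of_maps_to (g := fun T => M.closure (F ∪ T)) (t := flatsFinset M)
    (f := fun T => (-1 : ℤ) ^ T.ncard • φ (M.closure (F ∪ T)))
    fun T _ => (mem_flatsFinset hE).2 (M.isFlat_closure _)]
  refine Finset.sum_congr rfl fun G _ => Finset.sum_congr rfl fun T hT => ?_
  rw [(Finset.mem_filter.1 hT).2]

lemma sum_powersetFinset_closure_subset (hE : M.E.Finite) (hF : F ⊆ M.E) (hH : M.IsFlat H) :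
    ∑ T ∈ powersetFinset (M.E \ F) with M.closure (F ∪ T) ⊆ H, (-1 : ℤ) ^ T.ncard
      = if F = H then 1 else 0 := by
  have hclosure : ∀ T ⊆ M.E \ F, M.closure (F ∪ T) ⊆ H ↔ F ⊆ H ∧ T ⊆ H \ F := by
    intro T hT
    rw [hH.closure_subset_iff_subset (union_subset hF (hT.trans sdiff_subset)), union_subset_iff,
      subset_sdiff, and_iff_left (subset_sdiff.1 hT).2]
  by_cases hFH : F ⊆ H
  · have hfilter : (powersetFinset (M.E \ F)).filter (fun T => M.closure (F ∪ T) ⊆ H)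
        = powersetFinset (H \ F) := by
      ext T
      rw [Finset.mem_filter, mem_powersetFinset (hE.subset sdiff_subset),
        mem_powersetFinset (hE.subset (sdiff_subset.trans hH.subset_ground))]
      refine ⟨fun h => ((hclosure T h.1).1 h.2).2, fun h => ?_⟩
      have hTE : T ⊆ M.E \ F := h.trans (sdiff_subset_sdiff_left hH.subset_ground)
      exact ⟨hTE, (hclosure T hTE).2 ⟨hFH, h⟩⟩
    rw [hfilter,
      sum_powersetFinset_neg_one_pow_ncard (hE.subset (sdiff_subset.trans hH.subset_ground))]
    simp only [sdiff_eq_empty, subset_antisymm_iff (a := F), hFH, true_and]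
  · rw [Finset.filter_false_of_mem fun T hT h => hFH ((hclosure T ((mem_powersetFinset
      (hE.subset sdiff_subset)).1 hT)).1 h).1, Finset.sum_empty, if_neg (fun h => hFH h.subset)]

lemma sum_signedClosureCount_subset (hE : M.E.Finite) (hH : M.IsFlat H) :
    ∑ G ∈ flatsFinset M with G ⊆ H, signedClosureCount M G = 1 := by
  have h := sum_flatsFinset_sum_powersetFinset_closure hE fun G => if G ⊆ H then (1 : ℤ) else 0
  simp only [smul_eq_mul, mul_ite, mul_one, mul_zero, ← Finset.sum_filter] at h
  rw [← h, Finset.sum_congr rfl fun F hF =>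
    sum_powersetFinset_closure_subset hE ((mem_flatsFinset hE).1 hF).subset_ground hH,
    Finset.sum_ite_eq', if_pos ((mem_flatsFinset hE).2 hH)]

lemma signedClosureCount_eq (hE : M.E.Finite) (hM : Loopless M) {G : Set α} (hG : M.IsFlat G) :
    signedClosureCount M G = if G = ∅ then 1 else 0 :=
  eq_ite_of_forall_sum_filter_le_eq ((mem_flatsFinset hE).2 (isFlat_empty_of_loopless hM))
    (fun _ _ => empty_subset _)
    (fun _ hH => sum_signedClosureCount_subset hE ((mem_flatsFinset hE).1 hH))
    ((mem_flatsFinset hE).2 hG)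

theorem sum_flatsFinset_sum_powersetFinset_closure_eq {β : Type*} [AddCommGroup β]
    (hE : M.E.Finite) (hM : Loopless M) (φ : Set α → β) :
    ∑ F ∈ flatsFinset M, ∑ T ∈ powersetFinset (M.E \ F),
        (-1 : ℤ) ^ T.ncard • φ (M.closure (F ∪ T))
      = φ ∅ := by
  rw [sum_flatsFinset_sum_powersetFinset_closure hE, Finset.sum_congr rfl fun G hG => by
    rw [signedClosureCount_eq hE hM ((mem_flatsFinset hE).1 hG), ite_smul, one_smul, zero_smul],
    Finset.sum_ite_eq', if_pos ((mem_flatsFinset hE).2 (isFlat_empty_of_loopless hM))]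

end Flats

section CharPoly

variable {M : Matroid α}

lemma contract_eq_contract (M : Matroid α) (C : Set α) : contract M C = M ／ C := rfl

lemma redCharPoly_eq_sum_powersetFinset (hE : M.E.Finite) :
    redCharPoly M =
      ∑ T ∈ powersetFinset M.E, (-1 : ℤ) ^ T.ncard • qAnalogue (rk M M.E - rk M T) := by
  rw [redCharPoly, ← coe_powersetFinset hE, finsum_mem_coe_finset]

lemma redCharPoly_contract {F : Set α} (hE : M.E.Finite) (hF : F ⊆ M.E) :
    redCharPoly (M ／ F) = ∑ T ∈ powersetFinset (M.E \ F),
      (-1 : ℤ) ^ T.ncard • qAnalogue (rk M M.E - rk M (F ∪ T)) := by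
  rw [redCharPoly_eq_sum_powersetFinset (hE.subset sdiff_subset)]
  refine Finset.sum_congr rfl fun T hT => ?_
  have hground := rk_contract_add_rk hE hF (subset_refl (M.E \ F))
  have hT := rk_contract_add_rk hE hF ((mem_powersetFinset (hE.subset sdiff_subset)).1 hT)
  rw [union_sdiff_cancel hF] at hground
  rw [contract_ground,
    show rk (M ／ F) (M.E \ F) - rk (M ／ F) T = rk M M.E - rk M (F ∪ T) by omega]

lemma redCharPoly_contract_ground : redCharPoly (M ／ M.E) = 0 := by
  rw [redCharPoly, contract_ground, sdiff_self]
  simp [qAnalogue]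

lemma sum_flatsFinset_redCharPoly_contract (hE : M.E.Finite) (hM : Loopless M) :
    ∑ F ∈ flatsFinset M, redCharPoly (M ／ F) = qAnalogue (rk M M.E) := by
  calc ∑ F ∈ flatsFinset M, redCharPoly (M ／ F)
      = ∑ F ∈ flatsFinset M, ∑ T ∈ powersetFinset (M.E \ F),
          (-1 : ℤ) ^ T.ncard • qAnalogue (rk M M.E - rk M (M.closure (F ∪ T))) := by
        refine Finset.sum_congr rfl fun F hF => ?_
        have hFE := ((mem_flatsFinset hE).1 hF).subset_ground
        rw [redCharPoly_contract hE hFE]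
        refine Finset.sum_congr rfl fun T hT => ?_
        rw [rk_closure hE (union_subset hFE
          (((mem_powersetFinset (hE.subset sdiff_subset)).1 hT).trans sdiff_subset))]
    _ = qAnalogue (rk M M.E - rk M ∅) :=
        sum_flatsFinset_sum_powersetFinset_closure_eq hE hM fun G => qAnalogue (rk M M.E - rk M G)
    _ = qAnalogue (rk M M.E) := by rw [rk_empty, Nat.sub_zero]

end CharPoly

theorem redCharPoly_eq_qAnalogue_sub_sum (M : Matroid α) (hE : M.E.Finite)
    (hM : Loopless M) :
    redCharPoly M = qAnalogue (rk M M.E) -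
      ∑ᶠ F ∈ {F : Set α | M.IsFlat F ∧ F ≠ ∅ ∧ F ≠ M.E},
        redCharPoly (contract M F) := by
  have hflats : {F : Set α | M.IsFlat F ∧ F ≠ ∅ ∧ F ≠ M.E}
      = ↑(((flatsFinset M).erase ∅).filter (· ≠ M.E)) := by
    ext F
    simp [mem_flatsFinset hE, and_comm, and_assoc]
  simp only [contract_eq_contract]
  rw [hflats, finsum_mem_coe_finset,
    Finset.sum_filter_of_ne fun F _ hF => mt (fun hFE => hFE ▸ redCharPoly_contract_ground) hF,
    eq_sub_iff_add_eq, ← sum_flatsFinset_redCharPoly_contract hE hM,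
    ← Finset.add_sum_erase _ _ ((mem_flatsFinset hE).2 (isFlat_empty_of_loopless hM)),
    contract_empty]

end MatroidZeta
end

section
/- Let M be a matroid with lattice of flats L, and define the Poincaré polynomial P̄_M(q) = ∑_{F ∈ N°(M)} χ̄_{M_F}(q)/(q−1)^{#F}. Then P̄_M(q) = χ̄_M(q) + ∑_{F ∈ L̂} χ̄_{M/F}(q)·P̄_{M|F}(q), where L̂ = L \ {cl(∅), E}. -/
/-!
Split `N°(M)` into the empty flag, which contributes `χ̄_M`, and the flags `insert F C'` with top
element `F ∈ L̂` and `C' ∈ N°(M|F)`. The bases of `M_C` are the bases `B` of `M` for which every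
`B ∩ G`, `G ∈ C`, is a basis of `G`: these are exactly the bases attaining the bound
`∑_{G ∈ C} |B ∩ G| ≤ ∑_{G ∈ C} rk G` on the weight. Hence `M_{insert F C'} = (M|F)_{C'} ⊕ M/F`,
and since `χ` is multiplicative on direct sums and `χ = (q - 1) χ̄` on nonempty ground sets,
`χ̄_{M_{insert F C'}} = (q - 1) χ̄_{M/F} χ̄_{(M|F)_{C'}}`. This gives the divisibility by
`(q - 1)^{#C}` and turns the summand of `insert F C'` in `P̄_M` into `χ̄_{M/F}` times the summand
of `C'` in `P̄_{M|F}`.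
-/

open Polynomial

namespace MatroidZeta

open scoped Classical

variable {α : Type*}

/-- The Poincaré polynomial `P̄_M(q) = ∑_{C ∈ N°(M)} χ̄_{M_C}(q)/(q-1)^{#C}`
(the divisions are exact; they are implemented by division by the monic `(q-1)^{#C}`). -/
noncomputable def Pbar (M : Matroid α) : Polynomial ℤ :=
  ∑ᶠ C ∈ flagsCirc M, redCharPoly (flagMatroid M C) /ₘ ((X - 1) ^ C.card)

open scoped Matroid

lemma sum_powerset_union_of_disjoint {β : Type*} [AddCommMonoid β] {s t : Finset α}
    (h : Disjoint s t) (f : Finset α → β) :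
    ∑ u ∈ (s ∪ t).powerset, f u = ∑ p ∈ s.powerset ×ˢ t.powerset, f (p.1 ∪ p.2) := by
  have hsplit : ∀ u ∈ (s ∪ t).powerset, u ∩ s ∪ u ∩ t = u := fun u hu ↦ by
    rw [← Finset.inter_union_distrib_left, Finset.inter_eq_left.2 (Finset.mem_powerset.1 hu)]
  refine Finset.sum_nbij' (fun u ↦ (u ∩ s, u ∩ t)) (fun p ↦ p.1 ∪ p.2) ?_ ?_ hsplit ?_ ?_
  · intro u _
    simp [Finset.inter_subset_right]
  · intro p hp
    simp only [Finset.mem_product, Finset.mem_powerset] at hp ⊢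
    exact Finset.union_subset_union hp.1 hp.2
  · rintro ⟨u, v⟩ huv
    simp only [Finset.mem_product, Finset.mem_powerset] at huv
    have := Finset.disjoint_left.1 h
    ext x <;> simp only [Finset.mem_inter, Finset.mem_union] <;> grind
  · intro u hu
    rw [hsplit u hu]

lemma finsum_mem_subsets_eq_sum_powerset {β : Type*} [AddCommMonoid β] {E : Set α}
    (hE : E.Finite) (f : Set α → β) :
    ∑ᶠ S ∈ {S | S ⊆ E}, f S = ∑ T ∈ hE.toFinset.powerset, f T := by
  have himage : {S | S ⊆ E} = (fun T : Finset α ↦ (T : Set α)) '' hE.toFinset.powerset := by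
    ext S
    refine ⟨fun hS ↦ ⟨(hE.subset hS).toFinset, by simpa using hS, by simp⟩, ?_⟩
    rintro ⟨T, hT, rfl⟩
    simpa using hT
  rw [himage, finsum_mem_image Finset.coe_injective.injOn, finsum_mem_coe_finset]

lemma exists_mem_forall_subset_of_isChain {C : Finset (Set α)}
    (hC : IsChain (· ⊆ ·) (C : Set (Set α))) (hne : C.Nonempty) : ∃ F ∈ C, ∀ G ∈ C, G ⊆ F := by
  obtain ⟨F, hFC, hFmax⟩ := C.exists_maximal hne
  refine ⟨F, hFC, fun G hG ↦ ?_⟩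
  obtain hGF | hFG := hC.total (Finset.mem_coe.2 hG) (Finset.mem_coe.2 hFC)
  exacts [hGF, hFmax hG hFG]

lemma isBase_iff_contract_isBase_sdiff {M : Matroid α} {B F : Set α}
    (hBF : M.IsBasis (B ∩ F) F) : M.IsBase B ↔ (M ／ F).IsBase (B \ F) := by
  have hindep (J : Set α) : (M ／ F).Indep (J \ F) ↔ M.Indep (J \ F ∪ B ∩ F) :=
    hBF.contract_indep_sdiff_iff
  constructor
  · intro hB
    have hBi : (M ／ F).Indep (B \ F) :=
      (hindep B).2 (by rw [Set.sdiff_union_inter]; exact hB.indep)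
    refine hBi.isBase_of_maximal fun J hJ hBJ ↦ ?_
    have hJF : J \ F = J := sdiff_eq_left.2 (Set.subset_sdiff.1 hJ.subset_ground).2
    have hJB : B = J ∪ B ∩ F :=
      hB.eq_of_subset_indep (by simpa [hJF] using (hindep J).1 (by rwa [hJF]))
        ((Set.sdiff_union_inter B F).symm.subset.trans (Set.union_subset_union_left _ hBJ))
    refine hBJ.antisymm fun x hxJ ↦ ⟨hJB ▸ Or.inl hxJ, ?_⟩
    rw [← hJF] at hxJ
    exact hxJ.2
  · intro hB
    have hBi : M.Indep B := by simpa [Set.sdiff_union_inter] using (hindep B).1 hB.indep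
    refine hBi.isBase_of_maximal fun J hJ hBJ ↦ ?_
    have hJF : B ∩ F = J ∩ F := hBF.eq_of_subset_indep (hJ.inter_right F)
      (Set.inter_subset_inter_left F hBJ) Set.inter_subset_right
    have hJsdiff : B \ F = J \ F := hB.eq_of_subset_indep
      ((hindep J).2 (by rwa [hJF, Set.sdiff_union_inter])) (Set.sdiff_subset_sdiff_left hBJ)
    rw [← Set.sdiff_union_inter B F, ← Set.sdiff_union_inter J F, hJF, hJsdiff]

section Rank

variable {M : Matroid α} {I X Y : Set α}

lemma rk_eq_ncard_of_isBasis' (hE : M.E.Finite) (hI : M.IsBasis' I X) : rk M X = I.ncard := by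
  refine IsGreatest.csSup_eq ⟨⟨I, hI.indep, hI.subset, rfl⟩, ?_⟩
  rintro _ ⟨J, hJ, hJX, rfl⟩
  have hle : J.encard ≤ I.encard := hI.encard_eq_eRk ▸ hJ.encard_le_eRk_of_subset hJX
  simpa only [Set.ncard_def] using
    ENat.toNat_le_toNat hle (hE.subset hI.indep.subset_ground).encard_lt_top.ne

lemma ncard_le_rk (hE : M.E.Finite) (hI : M.Indep I) (hIX : I ⊆ X) : I.ncard ≤ rk M X := by
  obtain ⟨J, hJ, hIJ⟩ := hI.subset_isBasis'_of_subset hIX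
  exact rk_eq_ncard_of_isBasis' hE hJ ▸ Set.ncard_le_ncard hIJ (hE.subset hJ.indep.subset_ground)

lemma rk_mono (hE : M.E.Finite) (hXY : X ⊆ Y) : rk M X ≤ rk M Y := by
  obtain ⟨I, hI⟩ := M.exists_isBasis' X
  exact rk_eq_ncard_of_isBasis' hE hI ▸ ncard_le_rk hE hI.indep (hI.subset.trans hXY)

lemma isBasis_of_rk_le_ncard (hE : M.E.Finite) (hI : M.Indep I) (hIX : I ⊆ X)
    (hX : X ⊆ M.E) (h : rk M X ≤ I.ncard) : M.IsBasis I X := by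
  obtain ⟨J, hJ, hIJ⟩ := hI.subset_isBasis_of_subset hIX hX
  rw [rk_eq_ncard_of_isBasis' hE hJ.isBasis'] at h
  rwa [Set.eq_of_subset_of_ncard_le hIJ h (hE.subset hJ.indep.subset_ground)]

lemma rk_disjointSum_union {A B : Matroid α} (h : Disjoint A.E B.E) (hA : A.E.Finite)
    (hB : B.E.Finite) (hX : X ⊆ A.E) (hY : Y ⊆ B.E) :
    rk (A.disjointSum B h) (X ∪ Y) = rk A X + rk B Y := by
  obtain ⟨I, hI⟩ := (A.disjointSum B h).exists_isBasis (X ∪ Y)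
    (by simpa using Set.union_subset_union hX hY)
  have hXA : (X ∪ Y) ∩ A.E = X := by
    rw [Set.union_inter_distrib_right, Set.inter_eq_left.2 hX,
      (h.symm.mono_left hY).inter_eq, Set.union_empty]
  have hYB : (X ∪ Y) ∩ B.E = Y := by
    rw [Set.union_inter_distrib_right, Set.inter_eq_left.2 hY,
      (h.mono_left hX).inter_eq, Set.empty_union]
  have hI' := Matroid.disjointSum_isBasis_iff.1 hI
  rw [hXA, hYB] at hI'
  have hIfin : I.Finite := (hA.union hB).subset (hI.subset.trans (Set.union_subset_union hX hY))
  rw [rk_eq_ncard_of_isBasis' (by simpa using hA.union hB) hI.isBasis',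
    rk_eq_ncard_of_isBasis' hA hI'.1.isBasis', rk_eq_ncard_of_isBasis' hB hI'.2.1.isBasis',
    ← Set.ncard_union_eq (h.mono Set.inter_subset_right Set.inter_subset_right)
      (hIfin.inter_of_left _) (hIfin.inter_of_left _),
    ← Set.inter_union_distrib_left, Set.inter_eq_left.2 (hI.subset.trans hI'.2.2.2)]

end Rank

section CharPoly

variable {M : Matroid α}

lemma charPoly_eq_sum (hE : M.E.Finite) :
    charPoly M = ∑ T ∈ hE.toFinset.powerset, (-1 : ℤ) ^ T.card • X ^ (rk M M.E - rk M T) := by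
  simp only [charPoly, finsum_mem_subsets_eq_sum_powerset hE, Set.ncard_coe_finset]

lemma redCharPoly_eq_sum (hE : M.E.Finite) :
    redCharPoly M =
      ∑ T ∈ hE.toFinset.powerset, (-1 : ℤ) ^ T.card • qAnalogue (rk M M.E - rk M T) := by
  simp only [redCharPoly, finsum_mem_subsets_eq_sum_powerset hE, Set.ncard_coe_finset]

lemma charPoly_disjointSum {A B : Matroid α} (h : Disjoint A.E B.E) (hA : A.E.Finite)
    (hB : B.E.Finite) : charPoly (A.disjointSum B h) = charPoly A * charPoly B := by
  have hAB : (A.disjointSum B h).E.Finite := by simpa using hA.union hB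
  have hsplit : hAB.toFinset = hA.toFinset ∪ hB.toFinset := by ext; simp
  have hdisj : Disjoint hA.toFinset hB.toFinset := by simpa using h
  rw [charPoly_eq_sum hAB, charPoly_eq_sum hA, charPoly_eq_sum hB, hsplit,
    sum_powerset_union_of_disjoint hdisj, Finset.sum_mul_sum, ← Finset.sum_product']
  refine Finset.sum_congr rfl fun ⟨T₁, T₂⟩ hT ↦ ?_
  simp only [Finset.mem_product, Finset.mem_powerset] at hT
  have hT₁ : (T₁ : Set α) ⊆ A.E := by simpa using hT.1
  have hT₂ : (T₂ : Set α) ⊆ B.E := by simpa using hT.2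
  have h₁ := rk_mono hA hT₁
  have h₂ := rk_mono hB hT₂
  rw [Finset.coe_union, Finset.card_union_of_disjoint (hdisj.mono hT.1 hT.2),
    Matroid.disjointSum_ground_eq, rk_disjointSum_union h hA hB hT₁ hT₂,
    rk_disjointSum_union h hA hB subset_rfl subset_rfl,
    show rk A A.E + rk B B.E - (rk A T₁ + rk B T₂) = (rk A A.E - rk A T₁) + (rk B B.E - rk B T₂)
      by omega, pow_add, pow_add, smul_mul_smul_comm]

lemma X_sub_one_mul_redCharPoly (hE : M.E.Finite) (hne : M.E.Nonempty) :
    (X - 1) * redCharPoly M = charPoly M := by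
  have hsum : ∑ T ∈ hE.toFinset.powerset, (-1 : ℤ) ^ T.card = 0 :=
    Finset.sum_powerset_neg_one_pow_card_of_nonempty (by simpa using hne)
  have hterm (T : Finset α) (n : ℕ) : (X - 1) * ((-1 : ℤ) ^ T.card • qAnalogue n) =
      (-1 : ℤ) ^ T.card • X ^ n - (-1 : ℤ) ^ T.card • 1 := by
    rw [mul_smul_comm, qAnalogue, mul_geom_sum, smul_sub]
  simp only [redCharPoly_eq_sum hE, charPoly_eq_sum hE, Finset.mul_sum, hterm,
    Finset.sum_sub_distrib, ← Finset.sum_smul, hsum, zero_smul, sub_zero]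

lemma redCharPoly_disjointSum {A B : Matroid α} (h : Disjoint A.E B.E) (hA : A.E.Finite)
    (hB : B.E.Finite) (hAne : A.E.Nonempty) (hBne : B.E.Nonempty) :
    redCharPoly (A.disjointSum B h) = (X - 1) * redCharPoly A * redCharPoly B := by
  have hAB : (A.disjointSum B h).E.Finite := by simpa using hA.union hB
  have hABne : (A.disjointSum B h).E.Nonempty := by simpa using hAne.mono Set.subset_union_left
  refine mul_left_cancel₀ (X_sub_C_ne_zero (1 : ℤ)) ?_
  rw [C_1, X_sub_one_mul_redCharPoly hAB hABne, charPoly_disjointSum h hA hB,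
    ← X_sub_one_mul_redCharPoly hA hAne, ← X_sub_one_mul_redCharPoly hB hBne]
  ring

end CharPoly

lemma initialMatroid_eq {M N : Matroid α} {w : α → ℝ} (hNE : N.E = M.E)
    (hN : ∀ B, N.IsBase B ↔ M.IsBase B ∧ ∑ᶠ e ∈ B, w e = wt M w) : initialMatroid M w = N := by
  have hex : ∃ N : Matroid α, N.E = M.E ∧
      ∀ B, N.IsBase B ↔ M.IsBase B ∧ ∑ᶠ e ∈ B, w e = wt M w := ⟨N, hNE, hN⟩
  rw [initialMatroid, dif_pos hex]
  exact Matroid.ext_isBase (hex.choose_spec.1.trans hNE.symm)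
    fun B _ ↦ (hex.choose_spec.2 B).trans (hN B).symm

section FlagMatroid

variable {M : Matroid α} {C : Finset (Set α)} {B F : Set α}

lemma finsum_mem_flagWeight (hB : B.Finite) :
    ∑ᶠ e ∈ B, flagWeight C e = ∑ G ∈ C, ((B ∩ G).ncard : ℝ) := by
  rw [← hB.coe_toFinset, finsum_mem_coe_finset]
  unfold flagWeight
  rw [Finset.sum_comm]
  refine Finset.sum_congr rfl fun G _ ↦ ?_
  rw [Finset.sum_boole, ← Set.ncard_coe_finset]
  congr 2
  ext x
  simp

lemma finsum_mem_flagWeight_le (hE : M.E.Finite) (hB : M.IsBase B) :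
    ∑ᶠ e ∈ B, flagWeight C e ≤ ∑ G ∈ C, (rk M G : ℝ) := by
  rw [finsum_mem_flagWeight (hE.subset hB.subset_ground)]
  exact Finset.sum_le_sum fun G _ ↦
    Nat.cast_le.2 (ncard_le_rk hE (hB.indep.inter_right G) Set.inter_subset_right)

lemma finsum_mem_flagWeight_eq_iff (hE : M.E.Finite) (hCE : ∀ G ∈ C, G ⊆ M.E)
    (hB : M.IsBase B) :
    ∑ᶠ e ∈ B, flagWeight C e = ∑ G ∈ C, (rk M G : ℝ) ↔ ∀ G ∈ C, M.IsBasis (B ∩ G) G := by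
  have hle (G : Set α) (_ : G ∈ C) : (B ∩ G).ncard ≤ rk M G :=
    ncard_le_rk hE (hB.indep.inter_right G) Set.inter_subset_right
  rw [finsum_mem_flagWeight (hE.subset hB.subset_ground)]
  norm_cast
  rw [Finset.sum_eq_sum_iff_of_le hle]
  refine forall₂_congr fun G hG ↦
    ⟨fun h ↦ ?_, fun h ↦ (rk_eq_ncard_of_isBasis' hE h.isBasis').symm⟩
  exact isBasis_of_rk_le_ncard hE (hB.indep.inter_right G) Set.inter_subset_right (hCE G hG) h.ge

lemma flagMatroid_eq_of_isBase_iff {N : Matroid α} (hE : M.E.Finite) (hCE : ∀ G ∈ C, G ⊆ M.E)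
    (hNE : N.E = M.E) (hN : ∀ B, N.IsBase B ↔ M.IsBase B ∧ ∀ G ∈ C, M.IsBasis (B ∩ G) G) :
    flagMatroid M C = N := by
  obtain ⟨B₀, hB₀⟩ := N.exists_isBase
  obtain ⟨hB₀M, hB₀C⟩ := (hN B₀).1 hB₀
  have hwt : wt M (flagWeight C) = ∑ G ∈ C, (rk M G : ℝ) := by
    refine IsGreatest.csSup_eq
      ⟨⟨B₀, hB₀M, ((finsum_mem_flagWeight_eq_iff hE hCE hB₀M).2 hB₀C).symm⟩, ?_⟩
    rintro _ ⟨B, hB, rfl⟩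
    exact finsum_mem_flagWeight_le hE hB
  refine initialMatroid_eq hNE fun B ↦ ?_
  rw [hN, hwt]
  exact and_congr_right fun hB ↦ (finsum_mem_flagWeight_eq_iff hE hCE hB).symm

lemma isBase_disjointSum_contract_iff {N : Matroid α} (hFE : F ⊆ M.E) (hCF : ∀ G ∈ C, G ⊆ F)
    (hNE : N.E = F)
    (hN : ∀ B, N.IsBase B ↔ (M ↾ F).IsBase B ∧ ∀ G ∈ C, (M ↾ F).IsBasis (B ∩ G) G)
    (h : Disjoint N.E (M ／ F).E) (B : Set α) :
    (N.disjointSum (M ／ F) h).IsBase B ↔ M.IsBase B ∧ ∀ G ∈ insert F C, M.IsBasis (B ∩ G) G := by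
  have hrestrict : ∀ G ∈ C, (M ↾ F).IsBasis (B ∩ F ∩ G) G ↔ M.IsBasis (B ∩ G) G := by
    intro G hG
    rw [Matroid.isBasis_restrict_iff hFE, Set.inter_assoc, Set.inter_eq_right.2 (hCF G hG)]
    exact and_iff_left (hCF G hG)
  have hsdiff : B ⊆ M.E → B ∩ (M.E \ F) = B \ F := fun hBE ↦ by
    rw [← Set.inter_sdiff_assoc, Set.inter_eq_left.2 hBE]
  rw [Matroid.disjointSum_isBase_iff, hN, Matroid.contract_ground, hNE,
    Set.union_sdiff_cancel hFE, Matroid.isBase_restrict_iff hFE, Finset.forall_mem_insert,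
    forall₂_congr hrestrict]
  constructor
  · rintro ⟨⟨hBF, hBC⟩, hB, hBE⟩
    rw [hsdiff hBE] at hB
    exact ⟨(isBase_iff_contract_isBase_sdiff hBF).2 hB, hBF, hBC⟩
  · rintro ⟨hB, hBF, hBC⟩
    rw [hsdiff hB.subset_ground]
    exact ⟨⟨hBF, hBC⟩, (isBase_iff_contract_isBase_sdiff hBF).1 hB, hB.subset_ground⟩

lemma exists_isBase_iff_forall_isBasis_inter (hC : IsChain (· ⊆ ·) (C : Set (Set α)))
    (hCE : ∀ G ∈ C, G ⊆ M.E) :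
    ∃ N : Matroid α, N.E = M.E ∧ ∀ B, N.IsBase B ↔ M.IsBase B ∧ ∀ G ∈ C, M.IsBasis (B ∩ G) G := by
  induction C using Finset.strongInduction generalizing M with
  | H C ih =>
    obtain rfl | hne := C.eq_empty_or_nonempty
    · exact ⟨M, rfl, by simp⟩
    obtain ⟨F, hF, hmax⟩ := exists_mem_forall_subset_of_isChain hC hne
    have hCF : ∀ G ∈ C.erase F, G ⊆ F := fun G hG ↦ hmax G (Finset.mem_of_mem_erase hG)
    obtain ⟨N, hNE, hN⟩ := ih (C.erase F) (Finset.erase_ssubset hF) (M := M ↾ F)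
      (hC.mono (by simp)) hCF
    have h : Disjoint N.E (M ／ F).E := hNE ▸ Set.disjoint_sdiff_right
    refine ⟨N.disjointSum (M ／ F) h, by simp [hNE, Set.union_sdiff_cancel (hCE F hF)],
      fun B ↦ ?_⟩
    rw [isBase_disjointSum_contract_iff (hCE F hF) hCF hNE hN h, Finset.insert_erase hF]

lemma flagMatroid_ground (hE : M.E.Finite) (hC : IsChain (· ⊆ ·) (C : Set (Set α)))
    (hCE : ∀ G ∈ C, G ⊆ M.E) : (flagMatroid M C).E = M.E := by
  obtain ⟨N, hNE, hN⟩ := exists_isBase_iff_forall_isBasis_inter hC hCE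
  rw [flagMatroid_eq_of_isBase_iff hE hCE hNE hN, hNE]

lemma isBase_flagMatroid_iff (hE : M.E.Finite) (hC : IsChain (· ⊆ ·) (C : Set (Set α)))
    (hCE : ∀ G ∈ C, G ⊆ M.E) (B : Set α) :
    (flagMatroid M C).IsBase B ↔ M.IsBase B ∧ ∀ G ∈ C, M.IsBasis (B ∩ G) G := by
  obtain ⟨N, hNE, hN⟩ := exists_isBase_iff_forall_isBasis_inter hC hCE
  rw [flagMatroid_eq_of_isBase_iff hE hCE hNE hN, hN]

lemma flagMatroid_empty (hE : M.E.Finite) : flagMatroid M ∅ = M :=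
  flagMatroid_eq_of_isBase_iff hE (by simp) rfl (by simp)

lemma flagMatroid_insert (hE : M.E.Finite) (hFE : F ⊆ M.E)
    (hC : IsChain (· ⊆ ·) (C : Set (Set α))) (hCF : ∀ G ∈ C, G ⊆ F)
    (h : Disjoint (flagMatroid (M ↾ F) C).E (M ／ F).E) :
    flagMatroid M (insert F C) = (flagMatroid (M ↾ F) C).disjointSum (M ／ F) h := by
  have hFfin : (M ↾ F).E.Finite := hE.subset hFE
  have hground : (flagMatroid (M ↾ F) C).E = F := flagMatroid_ground hFfin hC hCF
  refine flagMatroid_eq_of_isBase_iff hE ?_ ?_ ?_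
  · simpa [Finset.forall_mem_insert] using ⟨hFE, fun G hG ↦ (hCF G hG).trans hFE⟩
  · simp [hground, Set.union_sdiff_cancel hFE]
  · exact isBase_disjointSum_contract_iff hFE hCF hground
      (isBase_flagMatroid_iff hFfin hC hCF) h

lemma redCharPoly_flagMatroid_insert (hE : M.E.Finite) (hFne : F.Nonempty) (hFE : F ⊂ M.E)
    (hC : IsChain (· ⊆ ·) (C : Set (Set α))) (hCF : ∀ G ∈ C, G ⊆ F) :
    redCharPoly (flagMatroid M (insert F C)) =
      (X - 1) * redCharPoly (M ／ F) * redCharPoly (flagMatroid (M ↾ F) C) := by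
  have hFfin : (M ↾ F).E.Finite := hE.subset hFE.subset
  have hground : (flagMatroid (M ↾ F) C).E = F := flagMatroid_ground hFfin hC hCF
  have h : Disjoint (flagMatroid (M ↾ F) C).E (M ／ F).E := by
    rw [hground]
    exact Set.disjoint_sdiff_right
  rw [flagMatroid_insert hE hFE.subset hC hCF h, redCharPoly_disjointSum h (by rwa [hground])
    (hE.subset Set.sdiff_subset) (by rwa [hground]) (Set.sdiff_nonempty.2 hFE.not_subset)]
  ring

lemma pow_dvd_redCharPoly_flagMatroid (hE : M.E.Finite)
    (hC : IsChain (· ⊆ ·) (C : Set (Set α))) (hCE : ∀ G ∈ C, G.Nonempty ∧ G ⊂ M.E) :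
    (X - 1) ^ C.card ∣ redCharPoly (flagMatroid M C) := by
  induction C using Finset.strongInduction generalizing M with
  | H C ih =>
    obtain rfl | hne := C.eq_empty_or_nonempty
    · simp
    obtain ⟨F, hF, hmax⟩ := exists_mem_forall_subset_of_isChain hC hne
    have hCF : ∀ G ∈ C.erase F, G.Nonempty ∧ G ⊂ F := fun G hG ↦
      ⟨(hCE G (Finset.mem_of_mem_erase hG)).1,
        (hmax G (Finset.mem_of_mem_erase hG)).ssubset_of_ne (Finset.ne_of_mem_erase hG)⟩
    have hCF' : IsChain (· ⊆ ·) ((C.erase F : Finset (Set α)) : Set (Set α)) := hC.mono (by simp)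
    obtain ⟨g, hg⟩ := ih (C.erase F) (Finset.erase_ssubset hF) (M := M ↾ F)
      (hE.subset (hCE F hF).2.subset) hCF' hCF
    refine ⟨redCharPoly (M ／ F) * g, ?_⟩
    rw [← Finset.insert_erase hF, redCharPoly_flagMatroid_insert hE (hCE F hF).1 (hCE F hF).2
      hCF' (fun G hG ↦ (hCF G hG).2.subset), hg,
      Finset.card_insert_of_notMem (Finset.notMem_erase F C)]
    ring

lemma redCharPoly_flagMatroid_insert_divByMonic (hE : M.E.Finite) (hFne : F.Nonempty)
    (hFE : F ⊂ M.E) (hC : IsChain (· ⊆ ·) (C : Set (Set α)))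
    (hCF : ∀ G ∈ C, G.Nonempty ∧ G ⊂ F) :
    redCharPoly (flagMatroid M (insert F C)) /ₘ (X - 1) ^ (insert F C).card =
      redCharPoly (M ／ F) * (redCharPoly (flagMatroid (M ↾ F) C) /ₘ (X - 1) ^ C.card) := by
  have hmonic (n : ℕ) : ((X - 1 : ℤ[X]) ^ n).Monic := by
    simpa using (monic_X_sub_C (1 : ℤ)).pow n
  obtain ⟨g, hg⟩ := pow_dvd_redCharPoly_flagMatroid (M := M ↾ F) (hE.subset hFE.subset) hC hCF
  rw [redCharPoly_flagMatroid_insert hE hFne hFE hC fun G hG ↦ (hCF G hG).2.subset, hg,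
    Finset.card_insert_of_notMem fun hF ↦ (hCF F hF).2.ne rfl,
    show (X - 1) * redCharPoly (M ／ F) * ((X - 1) ^ C.card * g) =
      (X - 1) ^ (C.card + 1) * (redCharPoly (M ／ F) * g) by ring,
    mul_divByMonic_cancel_left _ (hmonic _), mul_divByMonic_cancel_left _ (hmonic _)]

end FlagMatroid

def properFlats (M : Matroid α) : Set (Set α) := {F | M.IsFlat F ∧ M.closure ∅ ⊂ F ∧ F ≠ M.E}

section Flags

variable {M : Matroid α} {C : Finset (Set α)} {F G : Set α}

lemma isFlat_restrict_iff (hF : M.IsFlat F) (hGF : G ⊆ F) : (M ↾ F).IsFlat G ↔ M.IsFlat G := by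
  rw [Matroid.isFlat_iff_closure_eq, Matroid.isFlat_iff_closure_eq,
    Matroid.restrict_closure_eq _ hGF hF.subset_ground,
    Set.inter_eq_left.2 ((M.closure_subset_closure hGF).trans hF.closure.subset)]

lemma restrict_closure_empty_eq (hF : M.IsFlat F) : (M ↾ F).closure ∅ = M.closure ∅ := by
  rw [Matroid.restrict_closure_eq _ (Set.empty_subset F) hF.subset_ground,
    Set.inter_eq_left.2 ((M.closure_subset_closure (Set.empty_subset F)).trans hF.closure.subset)]

lemma nonempty_ssubset_of_mem_properFlats (hF : F ∈ properFlats M) : F.Nonempty ∧ F ⊂ M.E :=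
  ⟨(Set.nonempty_of_ssubset hF.2.1).mono Set.sdiff_subset,
    hF.1.subset_ground.ssubset_of_ne hF.2.2⟩

lemma mem_properFlats_of_mem_flagsCirc (hC : C ∈ flagsCirc M) (hG : G ∈ C) :
    G ∈ properFlats M :=
  ⟨(hC.1.1 G hG).1, (hC.1.1 G hG).2, fun h ↦ hC.2 (h ▸ hG)⟩

lemma nonempty_ssubset_of_mem_flagsCirc (hC : C ∈ flagsCirc M) (hG : G ∈ C) :
    G.Nonempty ∧ G ⊂ M.E :=
  nonempty_ssubset_of_mem_properFlats (mem_properFlats_of_mem_flagsCirc hC hG)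

lemma insert_mem_flagsCirc (hF : F ∈ properFlats M) (hC : C ∈ flagsCirc (M ↾ F)) :
    insert F C ∈ flagsCirc M := by
  obtain ⟨hFflat, hF0, hFE⟩ := hF
  have hCF (G) (hG : G ∈ C) : G ⊂ F := (nonempty_ssubset_of_mem_flagsCirc hC hG).2
  refine ⟨⟨Finset.forall_mem_insert _ _ _ |>.2 ⟨⟨hFflat, hF0⟩, fun G hG ↦ ?_⟩, ?_⟩, ?_⟩
  · rw [← isFlat_restrict_iff hFflat (hCF G hG).subset, ← restrict_closure_empty_eq hFflat]
    exact hC.1.1 G hG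
  · rw [Finset.coe_insert]
    exact hC.1.2.insert fun G hG _ ↦ Or.inr (hCF G hG).subset
  · rw [Finset.mem_insert, not_or]
    exact ⟨Ne.symm hFE, fun hE ↦ (hCF _ hE).not_subset hFflat.subset_ground⟩

lemma exists_insert_eq_of_mem_flagsCirc (hC : C ∈ flagsCirc M) (hne : C.Nonempty) :
    ∃ F ∈ properFlats M, ∃ C' ∈ flagsCirc (M ↾ F), insert F C' = C := by
  obtain ⟨F, hF, hmax⟩ := exists_mem_forall_subset_of_isChain hC.1.2 hne
  have hFflat := (hC.1.1 F hF).1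
  refine ⟨F, mem_properFlats_of_mem_flagsCirc hC hF, C.erase F,
    ⟨⟨fun G hG ↦ ?_, hC.1.2.mono (by simp)⟩, Finset.notMem_erase F C⟩, Finset.insert_erase hF⟩
  have hGC := Finset.mem_of_mem_erase hG
  rw [isFlat_restrict_iff hFflat (hmax G hGC), restrict_closure_empty_eq hFflat]
  exact hC.1.1 G hGC

lemma flagsCirc_eq_insert_biUnion :
    flagsCirc M = insert ∅ (⋃ F ∈ properFlats M, insert F '' flagsCirc (M ↾ F)) := by
  ext C
  simp only [Set.mem_insert_iff, Set.mem_iUnion, Set.mem_image, exists_prop]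
  refine ⟨fun hC ↦ ?_, ?_⟩
  · obtain rfl | hne := C.eq_empty_or_nonempty
    exacts [Or.inl rfl, Or.inr (exists_insert_eq_of_mem_flagsCirc hC hne)]
  · rintro (rfl | ⟨F, hF, C', hC', rfl⟩)
    · exact ⟨⟨by simp, by simp⟩, by simp⟩
    · exact insert_mem_flagsCirc hF hC'

lemma subset_of_mem_insert_of_mem_flagsCirc (hC : C ∈ flagsCirc (M ↾ F))
    (hG : G ∈ insert F C) : G ⊆ F := by
  obtain rfl | hG := Finset.mem_insert.1 hG
  exacts [subset_rfl, (hC.1.1 G hG).1.subset_ground]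

lemma pairwiseDisjoint_image_insert_flagsCirc :
    (properFlats M).PairwiseDisjoint fun F ↦ insert F '' flagsCirc (M ↾ F) := by
  intro F _ F' _ hne
  refine Set.disjoint_left.2 ?_
  rintro _ ⟨C, hC, rfl⟩ ⟨C', hC', hCC'⟩
  refine hne (subset_antisymm ?_ ?_)
  · exact subset_of_mem_insert_of_mem_flagsCirc hC' (hCC' ▸ Finset.mem_insert_self F C)
  · exact subset_of_mem_insert_of_mem_flagsCirc hC (hCC' ▸ Finset.mem_insert_self F' C')

lemma injOn_insert_flagsCirc_restrict : (flagsCirc (M ↾ F)).InjOn (insert F) := by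
  intro C hC C' hC' h
  have hnotMem {D : Finset (Set α)} (hD : D ∈ flagsCirc (M ↾ F)) : F ∉ D :=
    fun hF ↦ (nonempty_ssubset_of_mem_flagsCirc hD hF).2.ne rfl
  rw [← Finset.erase_insert (hnotMem hC), h, Finset.erase_insert (hnotMem hC')]

lemma flagsCirc_finite (hE : M.E.Finite) : (flagsCirc M).Finite := by
  refine (hE.finite_subsets.finite_subsets.preimage Finset.coe_injective.injOn).subset ?_
  intro C hC G hG
  exact (hC.1.1 G hG).1.subset_ground

lemma properFlats_finite (hE : M.E.Finite) : (properFlats M).Finite :=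
  hE.finite_subsets.subset fun _ hF ↦ hF.1.subset_ground

end Flags

theorem Pbar_recursion (M : Matroid α) (hE : M.E.Finite) :
    Pbar M = redCharPoly M +
      ∑ᶠ F ∈ {F : Set α | M.IsFlat F ∧ M.closure ∅ ⊂ F ∧ F ≠ M.E},
        redCharPoly (contract M F) * Pbar (M.restrict F) := by
  have hfin (F : Set α) (hF : F ∈ properFlats M) : (insert F '' flagsCirc (M ↾ F)).Finite :=
    (flagsCirc_finite (hE.subset hF.1.subset_ground)).image _
  have hempty : ∅ ∉ ⋃ F ∈ properFlats M, insert F '' flagsCirc (M ↾ F) := by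
    simp [Finset.insert_ne_empty]
  rw [Pbar, flagsCirc_eq_insert_biUnion,
    finsum_mem_insert _ hempty ((properFlats_finite hE).biUnion hfin),
    finsum_mem_biUnion pairwiseDisjoint_image_insert_flagsCirc (properFlats_finite hE) hfin,
    flagMatroid_empty hE, Finset.card_empty, pow_zero, divByMonic_one]
  congr 1
  refine finsum_mem_congr rfl fun F hF ↦ ?_
  obtain ⟨hFne, hFE⟩ := nonempty_ssubset_of_mem_properFlats hF
  rw [Pbar, mul_finsum_mem, finsum_mem_image injOn_insert_flagsCirc_restrict]
  refine finsum_mem_congr rfl fun C hC ↦ ?_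
  exact redCharPoly_flagMatroid_insert_divByMonic hE hFne hFE hC.1.2
    fun G hG ↦ nonempty_ssubset_of_mem_flagsCirc hC hG

end MatroidZeta
end
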